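/- arXiv:2212.12822 — 6 statements merged into one kernel-verified Lean document; each statement's English description precedes it below -/
import Mathlib

section
/- With the same setup as the early-stopped negative binomial fact (sequence X : ℕ → {−1,+1}, positive integers p, v, k, t_v the position of the v-th −1 truncated at p, N = #{i ≤ t_v : X_i = +1}, B = #{i ≤ min(p, k+v−1) : X_i = +1}), one has N ≤ k − 1 if and only if B ≤ k − 1. -/
/-- Number of `-1`'s among `X 1, …, X i`. -/
def negCount (X : ℕ → ℤ) (i : ℕ) : ℕ :=
  ((Finset.Icc 1 i).filter (fun j => X j = -1)).card

/-- Number of `+1`'s among `X 1, …, X n`. -/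
def posCount (X : ℕ → ℤ) (n : ℕ) : ℕ :=
  ((Finset.Icc 1 n).filter (fun i => X i = 1)).card

-- `t_v`: the first index `i ∈ {1,…,p}` at which the number of `-1`'s equals `v`,
-- and `p` if no such index exists.
open Classical in
noncomputable def stopTime (X : ℕ → ℤ) (p v : ℕ) : ℕ :=
  if ∃ i ∈ Finset.Icc 1 p, negCount X i = v then
    sInf {i | i ∈ Finset.Icc 1 p ∧ negCount X i = v}
  else p

/-! Whether the count of `+1`'s up to `t_v` is below `k` is decided by position `k + v - 1`:
before `t_v` fewer than `v` of the signs are `-1`, and at `t_v` (unless `t_v = p`) exactly `v`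
are, so comparing `t_v` with `min p (k + v - 1)` and trading `+1`'s for `-1`'s via
`posCount + negCount = n` settles both directions. -/

section Counts

variable (X : ℕ → ℤ)

theorem monotone_negCount : Monotone (negCount X) := fun _ _ h =>
  Finset.card_le_card (Finset.filter_subset_filter _ (Finset.Icc_subset_Icc_right h))

theorem monotone_posCount : Monotone (posCount X) := fun _ _ h =>
  Finset.card_le_card (Finset.filter_subset_filter _ (Finset.Icc_subset_Icc_right h))

theorem negCount_succ_le (n : ℕ) : negCount X (n + 1) ≤ negCount X n + 1 := by
  unfold negCount
  rw [← Order.succ_eq_add_one, ← Finset.insert_Icc_right_eq_Icc_succ (by simp),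
    Finset.filter_insert]
  split_ifs
  · exact Finset.card_insert_le _ _
  · exact Nat.le_succ _

theorem posCount_add_negCount (hX : ∀ i, X i = 1 ∨ X i = -1) (n : ℕ) :
    posCount X n + negCount X n = n := by
  have hneg : (Finset.Icc 1 n).filter (fun j => X j = -1)
      = (Finset.Icc 1 n).filter (fun j => ¬ X j = 1) :=
    Finset.filter_congr fun j _ => by rcases hX j with h | h <;> simp [h]
  rw [posCount, negCount, hneg, Finset.card_filter_add_card_filter_not, Nat.card_Icc,
    Nat.add_sub_cancel]

theorem exists_negCount_eq_of_le {v n : ℕ} (hv : 0 < v) (h : v ≤ negCount X n) :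
    ∃ i ∈ Finset.Icc 1 n, negCount X i = v := by
  induction n with
  | zero => simp [negCount] at h; omega
  | succ n ih =>
    by_cases h' : v ≤ negCount X n
    · obtain ⟨i, hi, hiv⟩ := ih h'
      exact ⟨i, Finset.Icc_subset_Icc_right (Nat.le_succ n) hi, hiv⟩
    · have := negCount_succ_le X n
      exact ⟨n + 1, Finset.mem_Icc.mpr ⟨by omega, le_rfl⟩, by omega⟩

end Counts

section StopTime

variable (X : ℕ → ℤ) (p v : ℕ)

theorem stopTime_le : stopTime X p v ≤ p := by
  unfold stopTime
  split_ifs with hex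
  · obtain ⟨i, hi, hiv⟩ := hex
    have hmem : i ∈ {i | i ∈ Finset.Icc 1 p ∧ negCount X i = v} := ⟨hi, hiv⟩
    exact (Nat.sInf_le hmem).trans (Finset.mem_Icc.mp hi).2
  · exact le_rfl

theorem negCount_stopTime_eq_or_stopTime_eq :
    negCount X (stopTime X p v) = v ∨ stopTime X p v = p := by
  unfold stopTime
  split_ifs with hex
  · obtain ⟨i, hi, hiv⟩ := hex
    have hne : {i | i ∈ Finset.Icc 1 p ∧ negCount X i = v}.Nonempty := ⟨i, hi, hiv⟩
    exact Or.inl (Nat.sInf_mem hne).2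
  · exact Or.inr rfl

theorem negCount_lt_of_lt_stopTime {v i : ℕ} (hv : 0 < v) (hi : i < stopTime X p v) :
    negCount X i < v := by
  by_contra! hle
  obtain ⟨j, hj, hjv⟩ := exists_negCount_eq_of_le X hv hle
  have hji : j ≤ i := (Finset.mem_Icc.mp hj).2
  have hjp : j ∈ Finset.Icc 1 p := by
    have := stopTime_le X p v
    rw [Finset.mem_Icc] at hj ⊢
    omega
  have hTj : stopTime X p v ≤ j := by
    unfold stopTime
    rw [if_pos ⟨j, hjp, hjv⟩]
    exact Nat.sInf_le ⟨hjp, hjv⟩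
  omega

end StopTime

theorem stmt_3_general (X : ℕ → ℤ) (hX : ∀ i, X i = 1 ∨ X i = -1)
    (p v k : ℕ) (hv : 0 < v) (hk : 0 < k) :
    posCount X (stopTime X p v) ≤ k - 1 ↔ posCount X (min p (k + v - 1)) ≤ k - 1 := by
  have hTp := stopTime_le X p v
  have hstop := negCount_stopTime_eq_or_stopTime_eq X p v
  have hbefore := fun i => negCount_lt_of_lt_stopTime X p (i := i) hv
  generalize stopTime X p v = T at *
  set m := min p (k + v - 1)
  have hsumT := posCount_add_negCount X hX T
  have hsumm := posCount_add_negCount X hX m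
  constructor
  · intro hT
    rcases hstop with hTv | rfl
    · have hTm : T ≤ m := le_min hTp (by omega)
      have := monotone_negCount X hTm
      omega
    · exact (monotone_posCount X (min_le_left _ _)).trans hT
  · intro hm
    by_cases hTm : T ≤ m
    · exact (monotone_posCount X hTm).trans hm
    · have hmk : m = k + v - 1 := min_eq_right (by omega)
      have := hbefore m (not_le.mp hTm)
      omega

/-- The early-stopped negative binomial count is at most `k - 1` iff the truncated
binomial count (up to position `min p (k+v-1)`) is at most `k - 1`. -/
theorem stmt_3 (X : ℕ → ℤ) (hX : ∀ i, X i = 1 ∨ X i = -1)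
    (p v k : ℕ) (hp : 0 < p) (hv : 0 < v) (hk : 0 < k) :
    posCount X (stopTime X p v) ≤ k - 1 ↔ posCount X (min p (k + v - 1)) ≤ k - 1 :=
  stmt_3_general X hX p v k hv hk
end

section
/- Let c > 0 be a real number and i a positive integer. Then ⌊ (c/(1+c)) · ⌈(1+c) i⌉ ⌋ = ⌊ c i ⌋. -/
/-!
Since `⌈(1 + c) i⌉ = ⌈c i⌉ + i`, the left-hand side is the floor of
`(c i + c ⌈c i⌉) / (1 + c)`, a weighted average of `a = c i` and `⌈a⌉` in which `a` has
positive weight. Such an average lies in `[a, ⌈a⌉]` and stays strictly below `⌊a⌋ + 1`,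
so its floor is `⌊a⌋`.
-/

theorem Int.ceil_one_add_mul_intCast (c : ℝ) (n : ℤ) : ⌈(1 + c) * n⌉ = ⌈c * n⌉ + n := by
  rw [add_mul, one_mul, add_comm, Int.ceil_add_intCast]

theorem Int.floor_div_one_add_add_mul_ceil {c : ℝ} (hc : 0 ≤ c) (a : ℝ) :
    ⌊(a + c * ⌈a⌉) / (1 + c)⌋ = ⌊a⌋ := by
  have hpos : 0 < 1 + c := by linarith
  have ha_ceil : a ≤ ⌈a⌉ := Int.le_ceil a
  have hceil_floor : (⌈a⌉ : ℝ) ≤ ⌊a⌋ + 1 := by exact_mod_cast Int.ceil_le_floor_add_one a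
  have hfloor : (⌊a⌋ : ℝ) ≤ a := Int.floor_le a
  have hlt : a < ⌊a⌋ + 1 := Int.lt_floor_add_one a
  rw [Int.floor_eq_iff, le_div_iff₀ hpos, div_lt_iff₀ hpos]
  constructor <;> nlinarith

theorem stmt_6_general (c : ℝ) (hc : 0 < c) (i : ℕ) :
    ⌊(c / (1 + c)) * ((⌈(1 + c) * (i : ℝ)⌉ : ℤ) : ℝ)⌋ = ⌊c * (i : ℝ)⌋ := by
  have hpos : 1 + c ≠ 0 := by positivity
  have hceil : ⌈(1 + c) * (i : ℝ)⌉ = ⌈c * (i : ℝ)⌉ + i := by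
    exact_mod_cast Int.ceil_one_add_mul_intCast c i
  rw [hceil, ← Int.floor_div_one_add_add_mul_ceil hc.le (c * i)]
  congr 1
  field_simp
  push_cast
  ring

/-- Floor–ceiling identity: for real `c > 0` and a positive integer `i`,
`⌊(c/(1+c)) ⌈(1+c) i⌉⌋ = ⌊c i⌋`. -/
theorem stmt_6 (c : ℝ) (hc : 0 < c) (i : ℕ) (hi : 1 ≤ i) :
    ⌊(c / (1 + c)) * ((⌈(1 + c) * (i : ℝ)⌉ : ℤ) : ℝ)⌋ = ⌊c * (i : ℝ)⌋ :=
  stmt_6_general c hc i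
end

section
/- Let I be a finite set, m ≥ 1, K_1 ⊆ … ⊆ K_m ⊆ I nested subsets, and k_1,…,k_m positive integers. Define d̄(R) = max( max_{1 ≤ i ≤ m}( |R ∩ K_i| − k_i ), 0 ) for R ⊆ I. Then for all disjoint U, V ⊆ I: d̄(U) + d̄(V) ≤ d̄(U ∪ V) ≤ d̄(U) + |V|. -/
/-!
Write `e_i(R) = |R ∩ K_i| - k_i`, so that `d̄(R) = max(max_i e_i(R), 0)`. Counting is additive on
disjoint sets, so `e_i(U ∪ V) = e_i(U) + |V ∩ K_i| ≤ e_i(U) + |V|`, which gives the upper bound.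
For superadditivity, take maximisers `i` of `e(U)` and `j` of `e(V)` and let `l = max i j`:
nestedness gives `|U ∩ K_i| + |V ∩ K_j| ≤ |(U ∪ V) ∩ K_l|`, and `k_l ≤ k_i + k_j` since the `k`
are nonnegative, so `e_i(U) + e_j(V) ≤ e_l(U ∪ V)`; the truncation at `0` is handled by
monotonicity of `d̄`.
-/

open Finset

namespace NestedReferenceBound

variable {ι α : Type*} [DecidableEq α] (K : ι → Finset α) (k : ι → ℤ)

def excess (R : Finset α) (i : ι) : ℤ := #(R ∩ K i) - k i

def bound (s : Finset ι) (hs : s.Nonempty) (R : Finset α) : ℤ := max (s.sup' hs (excess K k R)) 0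

variable {K k}

lemma excess_mono {R S : Finset α} (hRS : R ⊆ S) (i : ι) : excess K k R i ≤ excess K k S i := by
  have : #(R ∩ K i) ≤ #(S ∩ K i) := card_le_card (inter_subset_inter_right hRS)
  unfold excess
  omega

lemma excess_union {U V : Finset α} (hUV : Disjoint U V) (i : ι) :
    excess K k (U ∪ V) i = excess K k U i + #(V ∩ K i) := by
  have hdisj : Disjoint (U ∩ K i) (V ∩ K i) :=
    hUV.mono inter_subset_left inter_subset_left
  rw [excess, excess, union_inter_distrib_right, card_union_of_disjoint hdisj]
  push_cast
  ring

lemma excess_add_excess_le [LinearOrder ι] (hK : Monotone K) (hk : ∀ i, 0 ≤ k i)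
    {U V : Finset α} (hUV : Disjoint U V) (i j : ι) :
    excess K k U i + excess K k V j ≤ excess K k (U ∪ V) (max i j) := by
  have hU : #(U ∩ K i) ≤ #(U ∩ K (max i j)) :=
    card_le_card (inter_subset_inter_left (hK (le_max_left i j)))
  have hV : #(V ∩ K j) ≤ #(V ∩ K (max i j)) :=
    card_le_card (inter_subset_inter_left (hK (le_max_right i j)))
  have hkmax : k (max i j) ≤ k i + k j := by
    rcases max_choice i j with h | h <;> rw [h] <;> linarith [hk i, hk j]
  rw [excess_union hUV]
  unfold excess
  omega

variable {s : Finset ι} {hs : s.Nonempty}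

lemma bound_nonneg (R : Finset α) : 0 ≤ bound K k s hs R := le_max_right _ _

lemma excess_le_bound (R : Finset α) {i : ι} (hi : i ∈ s) : excess K k R i ≤ bound K k s hs R :=
  (le_sup' _ hi).trans (le_max_left _ _)

lemma bound_le_iff {R : Finset α} {c : ℤ} :
    bound K k s hs R ≤ c ↔ 0 ≤ c ∧ ∀ i ∈ s, excess K k R i ≤ c := by
  rw [bound, max_le_iff, sup'_le_iff, and_comm]

lemma bound_mono {R S : Finset α} (hRS : R ⊆ S) : bound K k s hs R ≤ bound K k s hs S :=
  bound_le_iff.2 ⟨bound_nonneg S, fun i hi => (excess_mono hRS i).trans (excess_le_bound S hi)⟩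

lemma bound_union_le {U V : Finset α} (hUV : Disjoint U V) :
    bound K k s hs (U ∪ V) ≤ bound K k s hs U + #V := by
  refine bound_le_iff.2 ⟨add_nonneg (bound_nonneg U) (Nat.cast_nonneg _), fun i hi => ?_⟩
  rw [excess_union hUV]
  exact add_le_add (excess_le_bound U hi) (Nat.cast_le.2 (card_le_card inter_subset_left))

lemma sup'_excess_add_sup'_excess_le [LinearOrder ι] (hK : Monotone K) (hk : ∀ i, 0 ≤ k i)
    {U V : Finset α} (hUV : Disjoint U V) :
    s.sup' hs (excess K k U) + s.sup' hs (excess K k V) ≤ bound K k s hs (U ∪ V) := by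
  obtain ⟨i, hi, hU⟩ := exists_mem_eq_sup' hs (excess K k U)
  obtain ⟨j, hj, hV⟩ := exists_mem_eq_sup' hs (excess K k V)
  have hl : max i j ∈ s := by rcases max_choice i j with h | h <;> rw [h] <;> assumption
  rw [hU, hV]
  exact (excess_add_excess_le hK hk hUV i j).trans (excess_le_bound _ hl)

lemma bound_add_bound_le [LinearOrder ι] (hK : Monotone K) (hk : ∀ i, 0 ≤ k i)
    {U V : Finset α} (hUV : Disjoint U V) :
    bound K k s hs U + bound K k s hs V ≤ bound K k s hs (U ∪ V) := by
  rcases le_total (s.sup' hs (excess K k U)) 0 with hU | hU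
  · rw [show bound K k s hs U = 0 from max_eq_right hU, zero_add]
    exact bound_mono subset_union_right
  rcases le_total (s.sup' hs (excess K k V)) 0 with hV | hV
  · rw [show bound K k s hs V = 0 from max_eq_right hV, add_zero]
    exact bound_mono subset_union_left
  rw [bound, bound, max_eq_left hU, max_eq_left hV]
  exact sup'_excess_add_sup'_excess_le hK hk hUV

end NestedReferenceBound

open NestedReferenceBound in
theorem stmt_9_general {α : Type*} [DecidableEq α] (m : ℕ) (hm : 0 < m)
    (K : Fin m → Finset α) (hKnest : ∀ i j : Fin m, i ≤ j → K i ⊆ K j)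
    (k : Fin m → ℕ)
    (dbar : Finset α → ℤ)
    (hdbar : ∀ R : Finset α, dbar R =
      max (Finset.univ.sup' ⟨⟨0, hm⟩, Finset.mem_univ _⟩
        (fun i => ((R ∩ K i).card : ℤ) - (k i : ℤ))) 0)
    (U V : Finset α) (hdisj : Disjoint U V) :
    dbar U + dbar V ≤ dbar (U ∪ V) ∧ dbar (U ∪ V) ≤ dbar U + (V.card : ℤ) := by
  have hdbar_eq : dbar = bound K (fun i => (k i : ℤ)) univ ⟨⟨0, hm⟩, mem_univ _⟩ :=
    funext hdbar
  have hK : Monotone K := fun i j hij => hKnest i j hij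
  have hk : ∀ i, 0 ≤ (k i : ℤ) := fun i => Int.natCast_nonneg (k i)
  rw [hdbar_eq]
  exact ⟨bound_add_bound_le hK hk hdisj, bound_union_le hdisj⟩

/-- Coherence of the interpolated true-discovery bound
`d̄(R) = max(max_i(|R ∩ K_i| - k_i), 0)` built from nested reference sets:
for disjoint `U, V ⊆ I`, `d̄(U) + d̄(V) ≤ d̄(U ∪ V) ≤ d̄(U) + |V|`. -/
theorem stmt_9 {α : Type*} [DecidableEq α] (I : Finset α) (m : ℕ) (hm : 0 < m)
    (K : Fin m → Finset α) (hKnest : ∀ i j : Fin m, i ≤ j → K i ⊆ K j)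
    (hKI : ∀ i, K i ⊆ I)
    (k : Fin m → ℕ) (hk : ∀ i, 1 ≤ k i)
    (dbar : Finset α → ℤ)
    (hdbar : ∀ R : Finset α, dbar R =
      max (Finset.univ.sup' ⟨⟨0, hm⟩, Finset.mem_univ _⟩
        (fun i => ((R ∩ K i).card : ℤ) - (k i : ℤ))) 0)
    (U V : Finset α) (hU : U ⊆ I) (hV : V ⊆ I) (hdisj : Disjoint U V) :
    dbar U + dbar V ≤ dbar (U ∪ V) ∧ dbar (U ∪ V) ≤ dbar U + (V.card : ℤ) :=
  stmt_9_general m hm K hKnest k dbar hdbar U V hdisj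
end

section
/- Let p ≥ 1, let W : {1,…,p} → ℝ with |W_1| > |W_2| > … > |W_p| > 0 and all W_i ≠ 0. For a positive integer v define the threshold T(v) = max{ |W_i| : #{ j : |W_j| ≥ |W_i| and W_j < 0 } = v } if #{j : W_j < 0} ≥ v, and T(v) = min_i |W_i| otherwise; and define Ŝ(v) = { i : W_i ≥ T(v) }. Then for any null set N ⊆ {1,…,p} such that W_i > 0 for all i ∉ N, and any v, the set Ŝ(v) ∩ N equals the set of null indices i with W_i > 0 occurring (in the ordering by decreasing |W|) strictly before the v-th null index with negative W (or all positive null indices if fewer than v null indices are negative). -/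
/-!
Since non-null statistics are positive, every negative statistic is null, and since `|W|` is
strictly decreasing, the number of negatives `W j` with `|W j| ≥ |W i|` is the number of negative
null indices `j ≤ i`. This count strictly increases at each negative null index, so the largest
`|W i|` at which it equals `v` is `|W j⋆|`; hence `T = |W j⋆|`, and a positive `W i` clears it
exactly when `i < j⋆`. With fewer than `v` negatives, `T = min |W i| > 0` is cleared by every
positive statistic and by no negative one.
-/

open Finset

section KnockoffThreshold

variable {ι : Type*} {W : ι → ℝ} {N : Finset ι}

lemma filter_univ_neg_eq_filter_null [Fintype ι] (hnonnull : ∀ i, i ∉ N → 0 < W i) :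
    univ.filter (fun j => W j < 0) = N.filter (fun j => W j < 0) := by
  ext j
  simp only [mem_filter, mem_univ, true_and, iff_and_self]
  intro hneg
  by_contra hj
  linarith [hnonnull j hj]

lemma filter_abs_le_neg_eq_filter_le [Fintype ι] [LinearOrder ι]
    (hsort : StrictAnti fun i => |W i|)
    (hnonnull : ∀ i, i ∉ N → 0 < W i) (i : ι) :
    univ.filter (fun j => |W i| ≤ |W j| ∧ W j < 0) = N.filter (fun j => j ≤ i ∧ W j < 0) := by
  ext j
  have hneg := congrArg (j ∈ ·) (filter_univ_neg_eq_filter_null hnonnull)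
  simp only [mem_filter, mem_univ, true_and, eq_iff_iff] at hneg ⊢
  rw [hsort.le_iff_ge]
  exact ⟨fun h => ⟨(hneg.1 h.2).1, h⟩, fun h => h.2⟩

lemma le_of_card_filter_le_le [LinearOrder ι] {s : Finset ι} {P : ι → Prop} [DecidablePred P]
    {i j : ι} (hj : j ∈ s) (hPj : P j)
    (hcard : #(s.filter fun k => k ≤ j ∧ P k) ≤ #(s.filter fun k => k ≤ i ∧ P k)) : j ≤ i := by
  by_contra! hij
  have hsub : s.filter (fun k => k ≤ i ∧ P k) ⊆ s.filter (fun k => k ≤ j ∧ P k) :=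
    monotone_filter_right s fun _ _ hk => ⟨hk.1.trans hij.le, hk.2⟩
  have hssub : s.filter (fun k => k ≤ i ∧ P k) ⊂ s.filter (fun k => k ≤ j ∧ P k) :=
    (ssubset_iff_of_subset hsub).2
      ⟨j, mem_filter.2 ⟨hj, le_rfl, hPj⟩, fun h => (mem_filter.1 h).2.1.not_gt hij⟩
  exact (card_lt_card hssub).not_ge hcard

lemma threshold_eq_abs_of_card_eq [Fintype ι] [LinearOrder ι]
    (hsort : StrictAnti fun i => |W i|)
    (hnonnull : ∀ i, i ∉ N → 0 < W i) {v : ℕ} {T : ℝ}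
    (hT : IsGreatest {x : ℝ | ∃ i,
      #(univ.filter fun j => |W i| ≤ |W j| ∧ W j < 0) = v ∧ x = |W i|} T)
    {jstar : ι} (hjN : jstar ∈ N) (hjneg : W jstar < 0)
    (hjcard : #(N.filter fun j => j ≤ jstar ∧ W j < 0) = v) :
    T = |W jstar| := by
  simp only [filter_abs_le_neg_eq_filter_le hsort hnonnull] at hT
  obtain ⟨⟨i, hicard, rfl⟩, hTub⟩ := hT
  have hji : jstar ≤ i := le_of_card_filter_le_le hjN hjneg (hjcard.trans hicard.symm).le
  exact le_antisymm (hsort.antitone hji) (hTub ⟨jstar, hjcard, rfl⟩)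

lemma filter_abs_le_eq_filter_pos_lt [LinearOrder ι] (hsort : StrictAnti fun i => |W i|)
    {jstar : ι} (hjneg : W jstar < 0) :
    N.filter (fun i => |W jstar| ≤ W i) = N.filter (fun i => 0 < W i ∧ i < jstar) := by
  refine filter_congr fun i _ => ⟨fun h => ?_, fun ⟨hpos, hij⟩ => ?_⟩
  · have hpos : 0 < W i := (abs_pos_of_neg hjneg).trans_le h
    refine ⟨hpos, lt_of_le_of_ne ?_ ?_⟩
    · exact hsort.le_iff_ge.1 (h.trans_eq (abs_of_pos hpos).symm)
    · rintro rfl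
      linarith
  · exact (abs_of_pos hpos).symm ▸ (hsort hij).le

lemma filter_le_eq_filter_pos {T : ℝ} (hTpos : 0 < T) (hT : ∀ i, T ≤ |W i|) :
    N.filter (fun i => T ≤ W i) = N.filter (fun i => 0 < W i) :=
  filter_congr fun i _ =>
    ⟨hTpos.trans_le, fun hpos => (abs_of_pos hpos).symm ▸ hT i⟩

end KnockoffThreshold

theorem stmt_14_general (p : ℕ) (W : Fin p → ℝ)
    (hWne : ∀ i, W i ≠ 0)
    (hsort : ∀ i j : Fin p, i < j → |W j| < |W i|)
    (N : Finset (Fin p)) (hnonnull : ∀ i, i ∉ N → 0 < W i)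
    (v : ℕ)
    (T : ℝ)
    (hT1 : v ≤ (Finset.univ.filter (fun j => W j < 0)).card →
      IsGreatest {x : ℝ | ∃ i : Fin p,
        (Finset.univ.filter (fun j => |W i| ≤ |W j| ∧ W j < 0)).card = v ∧
        x = |W i|} T)
    (hT2 : (Finset.univ.filter (fun j => W j < 0)).card < v →
      IsLeast {x : ℝ | ∃ i : Fin p, x = |W i|} T)
    (Shat : Finset (Fin p)) (hShat : Shat = Finset.univ.filter (fun i => T ≤ W i))
    (jstar : Fin p)
    (hjstar : v ≤ (N.filter (fun j => W j < 0)).card →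
      jstar ∈ N ∧ W jstar < 0 ∧
        (N.filter (fun j => j ≤ jstar ∧ W j < 0)).card = v) :
    (v ≤ (N.filter (fun j => W j < 0)).card →
      Shat ∩ N = N.filter (fun i => 0 < W i ∧ i < jstar)) ∧
    ((N.filter (fun j => W j < 0)).card < v →
      Shat ∩ N = N.filter (fun i => 0 < W i)) := by
  have hanti : StrictAnti fun i => |W i| := fun i j hij => hsort i j hij
  have hShatN : Shat ∩ N = N.filter (fun i => T ≤ W i) := by
    rw [hShat, filter_inter, univ_inter]
  rw [hShatN, ← filter_univ_neg_eq_filter_null hnonnull]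
  refine ⟨fun hv => ?_, fun hv => ?_⟩
  · obtain ⟨hjN, hjneg, hjcard⟩ := hjstar (filter_univ_neg_eq_filter_null hnonnull ▸ hv)
    rw [threshold_eq_abs_of_card_eq hanti hnonnull (hT1 hv) hjN hjneg hjcard,
      filter_abs_le_eq_filter_pos_lt hanti hjneg]
  · obtain ⟨⟨i, rfl⟩, hTmin⟩ := hT2 hv
    exact filter_le_eq_filter_pos (abs_pos.2 (hWne i)) fun j => hTmin ⟨j, rfl⟩

/-- Deterministic characterization of `Ŝ(v) ∩ N`: with statistics ordered by
strictly decreasing absolute value, all non-null statistics positive, threshold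
`T` as in Janson–Su (the largest `|W i|` such that exactly `v` negative
statistics have absolute value at least `|W i|`, or the minimal `|W i|` if there
are fewer than `v` negatives) and `Ŝ(v) = {i : W i ≥ T}`:
if at least `v` null statistics are negative, `Ŝ(v) ∩ N` is the set of null
indices `i` with `W i > 0` occurring strictly before the `v`-th negative null
index `j⋆`; otherwise it is the set of all positive null indices. -/
theorem stmt_14 (p : ℕ) (hp : 0 < p) (W : Fin p → ℝ)
    (hWne : ∀ i, W i ≠ 0)
    (hsort : ∀ i j : Fin p, i < j → |W j| < |W i|)
    (N : Finset (Fin p)) (hnonnull : ∀ i, i ∉ N → 0 < W i)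
    (v : ℕ) (hv : 1 ≤ v)
    (T : ℝ)
    (hT1 : v ≤ (Finset.univ.filter (fun j => W j < 0)).card →
      IsGreatest {x : ℝ | ∃ i : Fin p,
        (Finset.univ.filter (fun j => |W i| ≤ |W j| ∧ W j < 0)).card = v ∧
        x = |W i|} T)
    (hT2 : (Finset.univ.filter (fun j => W j < 0)).card < v →
      IsLeast {x : ℝ | ∃ i : Fin p, x = |W i|} T)
    (Shat : Finset (Fin p)) (hShat : Shat = Finset.univ.filter (fun i => T ≤ W i))
    (jstar : Fin p)
    (hjstar : v ≤ (N.filter (fun j => W j < 0)).card →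
      jstar ∈ N ∧ W jstar < 0 ∧
        (N.filter (fun j => j ≤ jstar ∧ W j < 0)).card = v) :
    (v ≤ (N.filter (fun j => W j < 0)).card →
      Shat ∩ N = N.filter (fun i => 0 < W i ∧ i < jstar)) ∧
    ((N.filter (fun j => W j < 0)).card < v →
      Shat ∩ N = N.filter (fun i => 0 < W i)) :=
  stmt_14_general p W hWne hsort N hnonnull v T hT1 hT2 Shat hShat jstar hjstar
end

section
/- Let p, m ≥ 1, let π be a permutation of {1,…,p}, and for each I ⊆ {1,…,p} and i ∈ {1,…,m} let L_i : 𝒫({1,…,p}) → ℕ be set functions satisfying the monotonicity condition: for any two sets I_1 = {u_1,…,u_s} and I_2 = {w_1,…,w_s} of equal size s listed so that π(u_1) < … < π(u_s) and π(w_1) < … < π(w_s), if π(u_j) ≤ π(w_j) for all j then L_i(I_1) ≤ L_i(I_2) for all i. Suppose critical values z_i depend only on |I|, and say I is locally rejected iff L_i(I) ≥ z_i^{|I|} for some i. Fix I of size s and t ∈ {1,…,p−s}, and let U = I ∪ C_t where C_t consists of the t elements of the complement I^c with the smallest π-values. If U is locally rejected, then every superset of I of size s + t is locally rejected. -/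
/-!
Write `J = I ∪ D` with `D = J \ I ⊆ Iᶜ`. Since `C` consists of the `π`-smallest elements
of `Iᶜ`, every threshold `x` has at most as many `π`-values `≤ x` in `D` as in `C`, hence
in `J` as in `I ∪ C`. For two sets of the same size such a counting domination forces the
sorted lists of `π`-values to be coordinatewise ordered, so monotonicity gives
`L i (I ∪ C) ≤ L i J`, while the critical values agree because the sets have the same size.
-/

open Finset

namespace Finset

section

variable {α : Type*} [LinearOrder α] {n : ℕ}

theorem card_filter_lt_orderEmbOfFin (s : Finset α) (h : #s = n) (j : Fin n) :
    #{x ∈ s | x < s.orderEmbOfFin h j} = j := by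
  have : {x ∈ s | x < s.orderEmbOfFin h j} = (Iio j).map (s.orderEmbOfFin h).toEmbedding := by
    ext x
    simp only [mem_filter, mem_map, mem_Iio, RelEmbedding.coe_toEmbedding]
    constructor
    · rintro ⟨hx, hlt⟩
      obtain ⟨k, rfl⟩ : x ∈ Set.range (s.orderEmbOfFin h) := by
        rwa [range_orderEmbOfFin]
      exact ⟨k, (s.orderEmbOfFin h).lt_iff_lt.mp hlt, rfl⟩
    · rintro ⟨k, hk, rfl⟩
      exact ⟨s.orderEmbOfFin_mem h k, (s.orderEmbOfFin h).lt_iff_lt.mpr hk⟩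
  rw [this, card_map, Fin.card_Iio]

theorem card_filter_le_orderEmbOfFin (s : Finset α) (h : #s = n) (j : Fin n) :
    #{x ∈ s | x ≤ s.orderEmbOfFin h j} = j + 1 := by
  have : {x ∈ s | x ≤ s.orderEmbOfFin h j} =
      insert (s.orderEmbOfFin h j) {x ∈ s | x < s.orderEmbOfFin h j} := by
    ext x
    simp only [mem_filter, mem_insert]
    constructor
    · rintro ⟨hx, hle⟩
      exact hle.eq_or_lt.imp id (⟨hx, ·⟩)
    · rintro (rfl | ⟨hx, hlt⟩)
      exacts [⟨s.orderEmbOfFin_mem h j, le_rfl⟩, ⟨hx, hlt.le⟩]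
  rw [this, card_insert_of_notMem (by simp), card_filter_lt_orderEmbOfFin]

theorem orderEmbOfFin_le_of_card_filter_le {s t : Finset α} (hs : #s = n) (ht : #t = n)
    (hcount : ∀ x, #{y ∈ t | y ≤ x} ≤ #{y ∈ s | y ≤ x}) (j : Fin n) :
    s.orderEmbOfFin hs j ≤ t.orderEmbOfFin ht j := by
  by_contra! hlt
  have := calc
    (j : ℕ) + 1 = #{y ∈ t | y ≤ t.orderEmbOfFin ht j} :=
        (card_filter_le_orderEmbOfFin t ht j).symm
    _ ≤ #{y ∈ s | y ≤ t.orderEmbOfFin ht j} := hcount _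
    _ ≤ #{y ∈ s | y < s.orderEmbOfFin hs j} :=
      card_le_card (monotone_filter_right s fun _ _ hy => hy.trans_lt hlt)
    _ = j := card_filter_lt_orderEmbOfFin s hs j
  omega

end

theorem card_filter_le_of_forall_lt {α β : Type*} [DecidableEq α] [LinearOrder β]
    (f : α → β) {C D : Finset α}
    (hcard : #D ≤ #C) (hlt : ∀ c ∈ C, ∀ d ∈ D \ C, f c < f d) (x : β) :
    #{d ∈ D | f d ≤ x} ≤ #{c ∈ C | f c ≤ x} := by
  by_cases hfar : ∃ d ∈ D \ C, f d ≤ x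
  · obtain ⟨d, hd, hdx⟩ := hfar
    rw [filter_true_of_mem fun c hc => (hlt c hc d hd).le.trans hdx]
    exact (card_filter_le D _).trans hcard
  · push Not at hfar
    refine card_le_card fun d hd => ?_
    rw [mem_filter] at hd ⊢
    by_contra hdC
    exact (hfar d (mem_sdiff.mpr ⟨hd.1, fun h => hdC ⟨h, hd.2⟩⟩)).not_ge hd.2

end Finset

theorem stmt_16_general (p m : ℕ)
    (π : Equiv.Perm (Fin p))
    (L : Fin m → Finset (Fin p) → ℕ)
    (z : Fin m → ℕ → ℕ)
    (hmono : ∀ (s : ℕ) (I1 I2 : Finset (Fin p))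
      (h1 : (I1.image fun u => π u).card = s)
      (h2 : (I2.image fun u => π u).card = s),
      (∀ j : Fin s, (I1.image fun u => π u).orderEmbOfFin h1 j ≤
        (I2.image fun u => π u).orderEmbOfFin h2 j) →
      ∀ i, L i I1 ≤ L i I2)
    (I : Finset (Fin p)) (s t : ℕ) (hs : I.card = s)
    (C : Finset (Fin p)) (hC1 : C ⊆ Iᶜ) (hC2 : C.card = t)
    (hC3 : ∀ x ∈ C, ∀ y ∈ Iᶜ \ C, π x < π y)
    (hrej : ∃ i, z i (I ∪ C).card ≤ L i (I ∪ C)) :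
    ∀ J : Finset (Fin p), I ⊆ J → J.card = s + t →
      ∃ i, z i J.card ≤ L i J := by
  intro J hIJ hJ
  obtain ⟨i, hi⟩ := hrej
  have hIC : Disjoint I C := disjoint_right.mpr fun c hc => mem_compl.mp (hC1 hc)
  have hU : #(I ∪ C) = s + t := by rw [card_union_of_disjoint hIC, hs, hC2]
  have hD : #(J \ I) ≤ #C := by rw [card_sdiff_of_subset hIJ, hJ, hs, hC2]; omega
  have hcount : ∀ x, #{y ∈ J.image fun u => π u | y ≤ x} ≤
      #{y ∈ (I ∪ C).image fun u => π u | y ≤ x} := by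
    intro x
    simp only [filter_image, card_image_of_injective _ π.injective]
    rw [← union_sdiff_of_subset hIJ, filter_union, filter_union,
      card_union_of_disjoint (disjoint_filter_filter disjoint_sdiff),
      card_union_of_disjoint (disjoint_filter_filter hIC)]
    refine Nat.add_le_add_left (card_filter_le_of_forall_lt π hD (fun c hc d hd => ?_) x) _
    obtain ⟨hdJI, hdC⟩ := mem_sdiff.mp hd
    exact hC3 c hc d (mem_sdiff.mpr ⟨mem_compl.mpr (mem_sdiff.mp hdJI).2, hdC⟩)
  have h1 : #((I ∪ C).image fun u => π u) = s + t := by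
    rw [card_image_of_injective _ π.injective, hU]
  have h2 : #(J.image fun u => π u) = s + t := by
    rw [card_image_of_injective _ π.injective, hJ]
  refine ⟨i, ?_⟩
  rw [hJ, ← hU]
  exact hi.trans (hmono _ _ _ h1 h2 (orderEmbOfFin_le_of_card_filter_le h1 h2 hcount) i)

/-- In the closed-testing shortcut, if the test statistics `L i` are monotone
with respect to the coordinatewise `π`-order on equal-size sets and the
critical values `z i` depend only on cardinality, then local rejection of
`U = I ∪ C_t` (with `C_t` the `t` elements of `Iᶜ` of smallest `π`-values)
implies local rejection of every superset of `I` of size `s + t`. -/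
theorem stmt_16 (p m : ℕ) (hp : 0 < p) (hm : 0 < m)
    (π : Equiv.Perm (Fin p))
    (L : Fin m → Finset (Fin p) → ℕ)
    (z : Fin m → ℕ → ℕ)
    (hmono : ∀ (s : ℕ) (I1 I2 : Finset (Fin p))
      (h1 : (I1.image fun u => π u).card = s)
      (h2 : (I2.image fun u => π u).card = s),
      (∀ j : Fin s, (I1.image fun u => π u).orderEmbOfFin h1 j ≤
        (I2.image fun u => π u).orderEmbOfFin h2 j) →
      ∀ i, L i I1 ≤ L i I2)
    (I : Finset (Fin p)) (s t : ℕ) (hs : I.card = s) (ht : 1 ≤ t)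
    (C : Finset (Fin p)) (hC1 : C ⊆ Iᶜ) (hC2 : C.card = t)
    (hC3 : ∀ x ∈ C, ∀ y ∈ Iᶜ \ C, π x < π y)
    (hrej : ∃ i, z i (I ∪ C).card ≤ L i (I ∪ C)) :
    ∀ J : Finset (Fin p), I ⊆ J → J.card = s + t →
      ∃ i, z i J.card ≤ L i J :=
  stmt_16_general p m π L z hmono I s t hs C hC1 hC2 hC3 hrej
end

section
/- Let p ≥ 1 and let Ŝ_0 = ∅ and Ŝ_i, Ŝ_i^− ⊆ {1,…,p} for i = 1,…,p be defined from a sign vector s ∈ {+1,−1}^p by Ŝ_i = { j ≤ i : s_j = +1 } and Ŝ_i^− = { j ≤ i : s_j = −1 }. Let n^− = |Ŝ_p^−| and for l = 0,…,n^− let a_l = max{ j ≥ 0 : |Ŝ_j^−| = l }. Then for any function V : ℕ → ℕ and any R ⊆ {1,…,p}: min_{1 ≤ j ≤ p} min( V(|Ŝ_j^−|) + |R \ Ŝ_j|, |R| ) = min_{0 ≤ l ≤ n^−} min( V(l) + |R \ Ŝ_{a_l}|, |R| ). -/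
/-!
Along a stretch of prefixes with the same number `l` of minus-signs, `Ŝ_j` only grows, so the
cost `min (V l + |R \ Ŝ_j|, |R|)` of the prefix `j` decreases and its minimum on the stretch is
attained at the last index `a_l`. The prefix `a_0` may be `0`, outside `{1,…,p}`, but its cost
`|R|` is an upper bound for every cost.
-/

/-- Positions of `+1`'s among the first `i` coordinates. -/
def posSet (ε : ℕ → ℤ) (i : ℕ) : Finset ℕ :=
  (Finset.Icc 1 i).filter (fun j => ε j = 1)

/-- Number of `-1`'s among the first `i` coordinates. -/
def negcnt (ε : ℕ → ℤ) (i : ℕ) : ℕ :=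
  ((Finset.Icc 1 i).filter (fun j => ε j = -1)).card

def prefixCost (ε : ℕ → ℤ) (V : ℕ → ℕ) (R : Finset ℕ) (j : ℕ) : ℕ :=
  min (V (negcnt ε j) + (R \ posSet ε j).card) R.card

lemma negcnt_mono (ε : ℕ → ℤ) : Monotone (negcnt ε) := fun _ _ hij =>
  Finset.card_le_card (Finset.filter_subset_filter _ (Finset.Icc_subset_Icc_right hij))

lemma posSet_mono (ε : ℕ → ℤ) : Monotone (posSet ε) := fun _ _ hij =>
  Finset.filter_subset_filter _ (Finset.Icc_subset_Icc_right hij)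

lemma posSet_zero (ε : ℕ → ℤ) : posSet ε 0 = ∅ := by
  simp [posSet]

section prefixCost

variable (ε : ℕ → ℤ) (V : ℕ → ℕ) (R : Finset ℕ)

lemma prefixCost_le_card (j : ℕ) : prefixCost ε V R j ≤ R.card :=
  min_le_right _ _

lemma prefixCost_zero : prefixCost ε V R 0 = R.card := by
  rw [prefixCost, posSet_zero, Finset.sdiff_empty]
  exact min_eq_right (Nat.le_add_left _ _)

lemma prefixCost_of_negcnt_eq {j l : ℕ} (h : negcnt ε j = l) :
    prefixCost ε V R j = min (V l + (R \ posSet ε j).card) R.card := by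
  rw [prefixCost, h]

lemma prefixCost_anti_of_negcnt_eq {i j : ℕ} (hij : i ≤ j) (hneg : negcnt ε i = negcnt ε j) :
    prefixCost ε V R j ≤ prefixCost ε V R i := by
  unfold prefixCost
  rw [hneg]
  gcongr
  exact posSet_mono ε hij

end prefixCost

theorem stmt_17_general (p : ℕ) (hp : 1 ≤ p) (ε : ℕ → ℤ)
    (V : ℕ → ℕ) (R : Finset ℕ)
    (a : ℕ → ℕ)
    (ha : ∀ l ≤ negcnt ε p, a l ≤ p ∧ negcnt ε (a l) = l ∧
      ∀ j ≤ p, negcnt ε j = l → j ≤ a l) :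
    (Finset.Icc 1 p).inf' ⟨1, Finset.mem_Icc.mpr ⟨le_rfl, hp⟩⟩
        (fun j => min (V (negcnt ε j) + (R \ posSet ε j).card) R.card)
      = (Finset.range (negcnt ε p + 1)).inf'
          ⟨0, Finset.mem_range.mpr (Nat.succ_pos _)⟩
          (fun l => min (V l + (R \ posSet ε (a l)).card) R.card) := by
  apply le_antisymm
  · refine Finset.le_inf' _ _ fun l hl => ?_
    obtain ⟨hap, hal, -⟩ := ha l (Nat.lt_succ_iff.mp (Finset.mem_range.mp hl))
    refine le_of_le_of_eq ?_ (prefixCost_of_negcnt_eq ε V R hal)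
    rcases Nat.eq_zero_or_pos (a l) with h0 | hpos
    · rw [h0, prefixCost_zero]
      exact (Finset.inf'_le _ (Finset.mem_Icc.mpr ⟨le_rfl, hp⟩)).trans
        (prefixCost_le_card ε V R 1)
    · exact Finset.inf'_le (prefixCost ε V R) (Finset.mem_Icc.mpr ⟨hpos, hap⟩)
  · refine Finset.le_inf' _ _ fun j hj => ?_
    have hjp := (Finset.mem_Icc.mp hj).2
    have hl := negcnt_mono ε hjp
    obtain ⟨-, hal, hmax⟩ := ha (negcnt ε j) hl
    calc _ ≤ min (V (negcnt ε j) + (R \ posSet ε (a (negcnt ε j))).card) R.card :=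
          Finset.inf'_le _ (Finset.mem_range.mpr (Nat.lt_succ_of_le hl))
      _ = prefixCost ε V R (a (negcnt ε j)) := prefixCost_of_negcnt_eq ε V R hal |>.symm
      _ ≤ prefixCost ε V R j := prefixCost_anti_of_negcnt_eq ε V R (hmax j hjp rfl) hal.symm

/-- Reindexing identity: the minimum over all prefixes `j ∈ {1,…,p}` of
`min(V(|Ŝ_j⁻|) + |R \ Ŝ_j|, |R|)` equals the minimum over the change points
`a_l` (the last index at which exactly `l` minus-signs have appeared),
`l = 0,…,n⁻`, of `min(V(l) + |R \ Ŝ_{a_l}|, |R|)`. -/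
theorem stmt_17 (p : ℕ) (hp : 1 ≤ p) (ε : ℕ → ℤ)
    (hε : ∀ j, ε j = 1 ∨ ε j = -1)
    (V : ℕ → ℕ) (R : Finset ℕ) (hR : R ⊆ Finset.Icc 1 p)
    (a : ℕ → ℕ)
    (ha : ∀ l ≤ negcnt ε p, a l ≤ p ∧ negcnt ε (a l) = l ∧
      ∀ j ≤ p, negcnt ε j = l → j ≤ a l) :
    (Finset.Icc 1 p).inf' ⟨1, Finset.mem_Icc.mpr ⟨le_rfl, hp⟩⟩
        (fun j => min (V (negcnt ε j) + (R \ posSet ε j).card) R.card)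
      = (Finset.range (negcnt ε p + 1)).inf'
          ⟨0, Finset.mem_range.mpr (Nat.succ_pos _)⟩
          (fun l => min (V l + (R \ posSet ε (a l)).card) R.card) :=
  stmt_17_general p hp ε V R a ha
end
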